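/- Let 0 ≤ r < 1 and let λ ∈ ℂ with |λ| = 1. If |λ + 1| > 2r, then sup_{θ∈ℝ} |1 − λ·(1 − r·e^{iθ})/(1 − r·e^{−iθ})| = |(1 − 2r² − 2i·r·√(1−r²)) − (Re λ + i·|Im λ|)|. -/

import Mathlib

/-!
Write `w = 1 - r e^{iθ}`; the quotient in the supremum is `m = w / w̄`, a unit complex number with
`Re m ≥ 1 - 2r²` because `|arg w| ≤ arcsin r`, and the two ends `c = 1 - 2r² - 2ir√(1 - r²)` and
`c̄` of this arc are attained at `θ = ± arccos r`. For a unit `λ`, `‖1 - λ m‖² = 2 - 2 Re (λ m)`, and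
once `Re λ ≥ 2r² - 1` (from `‖λ + 1‖² = 2 + 2 Re λ > 4r²`) the minimum of `Re (λ m)` over the arc
is reached at one of its ends, namely `c̄` if `Im λ ≥ 0` and `c` otherwise.
-/

open Complex
open scoped ComplexConjugate

lemma re_sq_add_im_sq_of_norm_eq_one {z : ℂ} (hz : ‖z‖ = 1) : z.re ^ 2 + z.im ^ 2 = 1 := by
  have h := sq_norm_sub_sq_re z
  rw [hz, one_pow] at h
  linarith

lemma sq_norm_sub_of_norm_eq_one {z w : ℂ} (hz : ‖z‖ = 1) (hw : ‖w‖ = 1) :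
    ‖z - w‖ ^ 2 = 2 - 2 * (z * conj w).re := by
  rw [Complex.sq_norm, normSq_sub, normSq_eq_norm_sq, normSq_eq_norm_sq, hz, hw]
  norm_num

lemma norm_re_add_I_mul_abs_im (z : ℂ) : ‖(z.re : ℂ) + I * |z.im|‖ = ‖z‖ := by
  rw [← sq_eq_sq₀ (norm_nonneg _) (norm_nonneg _), Complex.sq_norm, Complex.sq_norm,
    normSq_apply, normSq_apply]
  simp [← sq, sq_abs]

lemma norm_one_sub_mul_conj (l : ℂ) {c : ℂ} (hc : ‖c‖ = 1) : ‖1 - l * conj c‖ = ‖c - l‖ := by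
  have hcc : c * conj c = 1 := by rw [mul_conj, normSq_eq_norm_sq, hc]; norm_num
  rw [← one_mul ‖c - l‖, ← hc, ← norm_conj c, ← norm_mul, mul_sub, mul_comm (conj c), hcc,
    mul_comm l]

lemma cos_arccos_eq_and_sin_arccos_eq {a b : ℝ} (h : a ^ 2 + b ^ 2 = 1) (hb : 0 ≤ b) :
    Real.cos (Real.arccos a) = a ∧ Real.sin (Real.arccos a) = b := by
  refine ⟨Real.cos_arccos (by nlinarith) (by nlinarith), ?_⟩
  rw [Real.sin_arccos, show 1 - a ^ 2 = b ^ 2 by linarith, Real.sqrt_sq hb]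

/-- In polar angles `a = cos α`, `p = cos φ`, `u = cos μ` in `[0, π]` this reads
`cos (α + φ) ≤ cos (α + μ)`, which holds because `μ ≤ φ ≤ π - α`. -/
lemma mul_sub_mul_le_of_unit_circle {a b u v p q : ℝ} (hab : a ^ 2 + b ^ 2 = 1)
    (huv : u ^ 2 + v ^ 2 = 1) (hpq : p ^ 2 + q ^ 2 = 1) (hb : 0 ≤ b) (hv : 0 ≤ v) (hq : 0 ≤ q)
    (hpu : p ≤ u) (hpa : -p ≤ a) : a * p - b * q ≤ a * u - b * v := by
  obtain ⟨ha, hb⟩ := cos_arccos_eq_and_sin_arccos_eq hab hb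
  obtain ⟨hu, hv⟩ := cos_arccos_eq_and_sin_arccos_eq huv hv
  obtain ⟨hp, hq⟩ := cos_arccos_eq_and_sin_arccos_eq hpq hq
  have hμφ := Real.arccos_le_arccos hpu
  have hαφ : Real.arccos a ≤ Real.arccos (-p) := Real.arccos_le_arccos hpa
  rw [Real.arccos_neg] at hαφ
  calc a * p - b * q = Real.cos (Real.arccos a + Real.arccos p) := by
        rw [Real.cos_add, ha, hb, hp, hq]
    _ ≤ Real.cos (Real.arccos a + Real.arccos u) :=
        Real.cos_le_cos_of_nonneg_of_le_pi
          (add_nonneg (Real.arccos_nonneg a) (Real.arccos_nonneg u)) (by linarith) (by linarith)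
    _ = a * u - b * v := by rw [Real.cos_add, ha, hb, hu, hv]

lemma norm_one_sub_mul_le {l m c : ℂ} (hl : ‖l‖ = 1) (hm : ‖m‖ = 1) (hc : ‖c‖ = 1)
    (hc_im : c.im ≤ 0) (hcm : c.re ≤ m.re) (hlc : -c.re ≤ l.re) :
    ‖1 - l * m‖ ≤ ‖c - (l.re + I * |l.im|)‖ := by
  rw [← sq_le_sq₀ (norm_nonneg _) (norm_nonneg _),
    sq_norm_sub_of_norm_eq_one norm_one (by rw [norm_mul, hl, hm, one_mul]),
    sq_norm_sub_of_norm_eq_one hc ((norm_re_add_I_mul_abs_im l).trans hl)]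
  have key : l.re * c.re - |l.im| * -c.im ≤ l.re * m.re - |l.im| * |m.im| :=
    mul_sub_mul_le_of_unit_circle (by rw [sq_abs]; exact re_sq_add_im_sq_of_norm_eq_one hl)
      (by rw [sq_abs]; exact re_sq_add_im_sq_of_norm_eq_one hm)
      (by rw [neg_sq]; exact re_sq_add_im_sq_of_norm_eq_one hc)
      (abs_nonneg _) (abs_nonneg _) (neg_nonneg.2 hc_im) hcm hlc
  have hlm : (1 * conj (l * m)).re = l.re * m.re - l.im * m.im := by simp
  have hcl : (c * conj ((l.re : ℂ) + I * |l.im|)).re = c.re * l.re + c.im * |l.im| := by simp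
  have habs : l.im * m.im ≤ |l.im| * |m.im| := abs_mul l.im m.im ▸ le_abs_self _
  linarith

/-- `w / w̄ = e^{2i arg w}`, and `|sin (arg w)|` is the distance from `1` to the line `ℝ w`,
hence at most `‖w - 1‖`. -/
lemma one_sub_two_mul_sq_le_re_div_conj {w : ℂ} {r : ℝ} (h : ‖w - 1‖ ≤ r) :
    1 - 2 * r ^ 2 ≤ (w / conj w).re := by
  rcases eq_or_ne w 0 with rfl | hw
  · have : 1 ≤ r := by simpa using h
    rw [zero_div, zero_re]
    nlinarith
  have him : |w.im| ≤ ‖w‖ * r :=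
    calc |w.im| = |(conj w * (w - 1)).im| := by simp [mul_sub, mul_comm]
      _ ≤ ‖conj w * (w - 1)‖ := abs_im_le_norm _
      _ ≤ ‖w‖ * r := by rw [norm_mul, norm_conj]; gcongr
  have him2 := pow_le_pow_left₀ (abs_nonneg _) him 2
  rw [sq_abs, mul_pow, ← normSq_eq_norm_sq, normSq_apply] at him2
  rw [div_re, normSq_conj, conj_re, conj_im, ← add_div, le_div_iff₀ (normSq_pos.2 hw),
    normSq_apply]
  nlinarith

lemma norm_div_conj_self {w : ℂ} (hw : w ≠ 0) : ‖w / conj w‖ = 1 := by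
  rw [norm_div, norm_conj, div_self (norm_ne_zero_iff.2 hw)]

lemma one_sub_mul_exp_neg (r θ : ℝ) :
    1 - (r : ℂ) * exp (-(I * θ)) = conj (1 - r * exp (I * θ)) := by
  simp [← exp_conj]

lemma norm_one_sub_mul_exp_sub_one (r θ : ℝ) : ‖(1 - (r : ℂ) * exp (I * θ)) - 1‖ = |r| := by
  simp

lemma one_sub_mul_exp_ne_zero {r : ℝ} (hr : |r| < 1) (θ : ℝ) : 1 - (r : ℂ) * exp (I * θ) ≠ 0 :=
  fun h => by simpa [h] using (norm_one_sub_mul_exp_sub_one r θ).trans_lt hr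

noncomputable def circleQuot (r θ : ℝ) : ℂ := (1 - r * exp (I * θ)) / (1 - r * exp (-(I * θ)))

lemma circleQuot_eq_div_conj (r θ : ℝ) :
    circleQuot r θ = (1 - r * exp (I * θ)) / conj (1 - r * exp (I * θ)) := by
  rw [circleQuot, one_sub_mul_exp_neg]

lemma circleQuot_neg (r θ : ℝ) : circleQuot r (-θ) = conj (circleQuot r θ) := by
  simp only [circleQuot_eq_div_conj, map_div₀, ofReal_neg, mul_neg, ← one_sub_mul_exp_neg]

lemma norm_circleQuot {r : ℝ} (hr : |r| < 1) (θ : ℝ) : ‖circleQuot r θ‖ = 1 := by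
  rw [circleQuot_eq_div_conj]
  exact norm_div_conj_self (one_sub_mul_exp_ne_zero hr θ)

lemma one_sub_two_mul_sq_le_re_circleQuot (r θ : ℝ) : 1 - 2 * r ^ 2 ≤ (circleQuot r θ).re := by
  rw [circleQuot_eq_div_conj, ← sq_abs r]
  exact one_sub_two_mul_sq_le_re_div_conj (norm_one_sub_mul_exp_sub_one r θ).le

/-- With `e^{iθ} = r + i s`, `s = √(1 - r²)`, one has `w = s (s - i r)` and `w / w̄ = (s - i r)²`. -/
lemma circleQuot_arccos {r : ℝ} (hr : |r| < 1) :
    circleQuot r (Real.arccos r)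
      = 1 - 2 * (r : ℂ) ^ 2 - 2 * I * (r : ℂ) * (Real.sqrt (1 - r ^ 2) : ℂ) := by
  obtain ⟨hr₁, hr₂⟩ := abs_lt.1 hr
  set s := Real.sqrt (1 - r ^ 2)
  have hs : (s : ℂ) ^ 2 = 1 - (r : ℂ) ^ 2 := by
    exact_mod_cast Real.sq_sqrt (by nlinarith : 0 ≤ 1 - r ^ 2)
  have he : exp (I * Real.arccos r) = r + s * I := by
    rw [mul_comm, exp_mul_I, ← ofReal_cos, ← ofReal_sin, Real.cos_arccos hr₁.le hr₂.le,
      Real.sin_arccos]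
  have hne := (map_ne_zero conj).2 (one_sub_mul_exp_ne_zero hr (Real.arccos r))
  rw [circleQuot_eq_div_conj, div_eq_iff hne, he]
  simp only [map_sub, map_one, map_mul, map_add, conj_ofReal, conj_I]
  linear_combination (2 * (r : ℂ) ^ 2 * s ^ 2) * I_sq - 2 * (r : ℂ) ^ 2 * hs

theorem sup_formula_of_far (r : ℝ) (hr0 : 0 ≤ r) (hr1 : r < 1)
    (l : ℂ) (hl : ‖l‖ = 1) (hcond : ‖l + 1‖ > 2 * r) :
    (⨆ θ : ℝ, ‖
        (1 - l * ((1 - (r : ℂ) * Complex.exp (Complex.I * θ))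
            / (1 - (r : ℂ) * Complex.exp (-(Complex.I * θ)))))‖)
      = ‖
          ((1 - 2 * (r : ℂ) ^ 2 - 2 * Complex.I * (r : ℂ) * (Real.sqrt (1 - r ^ 2) : ℂ))
            - ((l.re : ℂ) + Complex.I * ((|l.im| : ℝ) : ℂ)))‖ := by
  change (⨆ θ : ℝ, ‖1 - l * circleQuot r θ‖) = _
  have hr : |r| < 1 := abs_lt.2 ⟨by linarith, hr1⟩
  set c : ℂ := 1 - 2 * (r : ℂ) ^ 2 - 2 * I * (r : ℂ) * (Real.sqrt (1 - r ^ 2) : ℂ)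
  have hc : circleQuot r (Real.arccos r) = c := circleQuot_arccos hr
  have hc_norm : ‖c‖ = 1 := hc ▸ norm_circleQuot hr _
  have hc_re : c.re = 1 - 2 * r ^ 2 := by simp [c, ← ofReal_pow]
  have hc_im : c.im ≤ 0 := by simpa [c, ← ofReal_pow] using by positivity
  have hl_re : -c.re ≤ l.re := by
    have h : ‖l + 1‖ ^ 2 = 2 + 2 * l.re := by
      simpa using sq_norm_sub_of_norm_eq_one hl (by simp : ‖(-1 : ℂ)‖ = 1)
    nlinarith
  have hbound (θ : ℝ) : ‖1 - l * circleQuot r θ‖ ≤ ‖c - (l.re + I * |l.im|)‖ :=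
    norm_one_sub_mul_le hl (norm_circleQuot hr θ) hc_norm hc_im
      (hc_re ▸ one_sub_two_mul_sq_le_re_circleQuot r θ) hl_re
  refine IsGreatest.csSup_eq ⟨?_, Set.forall_mem_range.2 hbound⟩
  rcases le_or_gt 0 l.im with him | him
  · refine ⟨-Real.arccos r, ?_⟩
    dsimp only
    rw [circleQuot_neg, hc, norm_one_sub_mul_conj l hc_norm, abs_of_nonneg him, mul_comm I,
      re_add_im]
  · refine ⟨Real.arccos r, ?_⟩
    dsimp only
    rw [hc, ← conj_conj c, norm_one_sub_mul_conj l ((norm_conj c).trans hc_norm), ← norm_conj,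
      abs_of_neg him]
    congr 1
    apply Complex.ext <;> simp
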